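/- Let n be divisible by 6 and let |φ⟩ be a unit vector in (ℂ²)^{⊗n} with U(g)|φ⟩ = |φ⟩ for every g ∈ ℤ₂×ℤ₂. Then for all distinct nontrivial g, h ∈ ℤ₂×ℤ₂, P_n^{(Q)}(g,h | |φ⟩⟨φ|) = (13 + 3⟨φ| S_{[1, n/6+1]}(g) |φ⟩)/16. Consequently, if ⟨φ| S_{[1, n/6+1]}(g) |φ⟩ > 1/3 for every nontrivial g, then min over distinct nontrivial g, h of P_n^{(Q)}(g,h | |φ⟩⟨φ|) exceeds 7/8. -/

import Mathlib

open Matrix Complex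
open scoped ComplexOrder

noncomputable section

/-- The state space of `n` qubits, as functions on classical bit strings. -/
abbrev QState (n : ℕ) := (Fin n → Fin 2) → ℂ

/-- Operators on `n` qubits: `2^n × 2^n` complex matrices. -/
abbrev Op (n : ℕ) := Matrix (Fin n → Fin 2) (Fin n → Fin 2) ℂ

/-- The single-qubit Pauli `X` matrix. -/
def Xmat : Matrix (Fin 2) (Fin 2) ℂ := !![0, 1; 1, 0]

/-- The single-qubit Pauli `Z` matrix. -/
def Zmat : Matrix (Fin 2) (Fin 2) ℂ := !![1, 0; 0, -1]

/-- Map a 1-based cyclic site label `j ∈ {1,…,n}` (taken mod `n`) to an index in `Fin n`. -/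
def site (n : ℕ) [NeZero n] (j : ℕ) : Fin n :=
  ⟨(j + (n - 1)) % n, Nat.mod_lt _ (Nat.pos_of_ne_zero (NeZero.ne n))⟩

/-- The operator acting as the single-qubit matrix `M` on qubit `i` and as identity elsewhere. -/
def onSite (n : ℕ) (i : Fin n) (M : Matrix (Fin 2) (Fin 2) ℂ) : Op n :=
  Matrix.of fun s t => (if ∀ k, k ≠ i → s k = t k then 1 else 0) * M (s i) (t i)

/-- Pauli `X` on (1-based, cyclic) site `j`. -/
def PX (n : ℕ) [NeZero n] (j : ℕ) : Op n := onSite n (site n j) Xmat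

/-- Pauli `Z` on (1-based, cyclic) site `j`. -/
def PZ (n : ℕ) [NeZero n] (j : ℕ) : Op n := onSite n (site n j) Zmat

/-- The cyclic cluster stabilizer `K_j = Z_{j-1} X_j Z_{j+1}` (for `1 ≤ j ≤ n`). -/
def Kstab (n : ℕ) [NeZero n] (j : ℕ) : Op n := PZ n (j - 1) * PX n j * PZ n (j + 1)

/-- The symmetry group `ℤ₂ × ℤ₂`. -/
abbrev G2 := ZMod 2 × ZMod 2

/-- The nontrivial element `x = (0,1)` of `ℤ₂ × ℤ₂`. -/
def gx : G2 := (0, 1)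

/-- The nontrivial element `y = (1,0)` of `ℤ₂ × ℤ₂`. -/
def gy : G2 := (1, 0)

/-- The nontrivial element `z = (1,1)` of `ℤ₂ × ℤ₂`. -/
def gz : G2 := (1, 1)

/-- The global symmetry representation `U((a,b)) = ∏_{j odd} X_j^a ∏_{j even} X_j^b`
on `n` qubits (`n` even), written as a product over the `n/2` two-site blocks. -/
def Usym (n : ℕ) [NeZero n] (g : G2) : Op n :=
  ((List.range (n / 2)).map
    (fun p => PX n (2 * p + 1) ^ g.1.val * PX n (2 * p + 2) ^ g.2.val)).prod

/-- Left boundary operator `V^L_p((a,b))`: `Z^b` on qubit `2p-1` and `X^b Z^a` on qubit `2p`. -/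
def VL (n : ℕ) [NeZero n] (p : ℕ) (g : G2) : Op n :=
  PZ n (2 * p - 1) ^ g.2.val * (PX n (2 * p) ^ g.2.val * PZ n (2 * p) ^ g.1.val)

/-- Right boundary operator `V^R_p((a,b))`: `Z^b X^a` on qubit `2p-1` and `Z^a` on qubit `2p`. -/
def VR (n : ℕ) [NeZero n] (p : ℕ) (g : G2) : Op n :=
  (PZ n (2 * p - 1) ^ g.2.val * PX n (2 * p - 1) ^ g.1.val) * PZ n (2 * p) ^ g.1.val

/-- Truncated symmetry `U_{[p,q]}((a,b)) = ∏_{r=p+1}^{q-1} X_{2r-1}^a X_{2r}^b`. -/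
def Ustr (n : ℕ) [NeZero n] (p q : ℕ) (g : G2) : Op n :=
  ((List.range (q - (p + 1))).map
    (fun r => PX n (2 * (p + 1 + r) - 1) ^ g.1.val * PX n (2 * (p + 1 + r)) ^ g.2.val)).prod

/-- The string order parameter `S_{[p,q]}(g) = V^L_p(g) · U_{[p,q]}(g) · V^R_q(g)`. -/
def SOPm (n : ℕ) [NeZero n] (p q : ℕ) (g : G2) : Op n :=
  VL n p g * Ustr n p q g * VR n q g

/-- The twisted string order parameter
`T_{[p,q]}^{(g,h)} = V^R_q(g) · U(h) · V^L_p(g) · U_{[p,q]}(g)`. -/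
def TSOP (n : ℕ) [NeZero n] (p q : ℕ) (g h : G2) : Op n :=
  VR n q g * Usym n h * VL n p g * Ustr n p q g

/-- The triangle-game winning operator
`O_{g,h} = (1/32)(12·1 + 12 U(g) + U(h) + U(gh) − 3T − 3U(g)T)` with `T = T_{[1,n/6+1]}^{(g,h)}`. -/
def Owin (n : ℕ) [NeZero n] (g h : G2) : Op n :=
  (32 : ℂ)⁻¹ • (12 • (1 : Op n) + 12 • Usym n g + Usym n h + Usym n (g + h)
    - 3 • TSOP n 1 (n / 6 + 1) g h - 3 • (Usym n g * TSOP n 1 (n / 6 + 1) g h))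

/-- The `n`-fold tensor product `|+⟩^{⊗n}`, with all amplitudes `(1/√2)^n`. -/
def plusState (n : ℕ) : QState n := fun _ => (((Real.sqrt 2)⁻¹ : ℝ) : ℂ) ^ n

/-- The controlled-`Z` gate between (1-based, cyclic) sites `j` and `k`. -/
def CZm (n : ℕ) [NeZero n] (j k : ℕ) : Op n :=
  Matrix.of fun s t =>
    if s = t then (if s (site n j) = 1 ∧ s (site n k) = 1 then -1 else 1) else 0

/-- The `n`-qubit cyclic cluster state `|C_n⟩ = (∏_{j=1}^n CZ_{j,j+1}) |+⟩^{⊗n}`. -/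
def cluster (n : ℕ) [NeZero n] : QState n :=
  (((List.range n).map (fun j => CZm n (j + 1) (j + 2))).prod).mulVec (plusState n)

/-!
Every operator in the game is, up to a sign, a Pauli word `X^x Z^z`, and two Pauli words commute
up to the sign `(-1)^(z ⬝ x' + z' ⬝ x)`. Moving the right boundary operator `V^R_q(g)` through
`U(h)` therefore produces the sign `(-1)^ω(g,h)`, where `ω` is the symplectic form of `ℤ₂ × ℤ₂`,
equal to `1` for distinct nontrivial `g, h`; and `V^R_q(g)` commutes with `V^L_p(g)` and with the
string between them, since their supports are disjoint. Hence `T = -U(h) S`. In a symmetric state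
`U(k)` can be dropped from the left of an expectation value (it is Hermitian and fixes `φ`), so
`⟨T⟩ = ⟨U(g) T⟩ = -⟨S⟩` and `⟨U(k)⟩ = 1`, giving `(12 + 12 + 1 + 1 + 6⟨S⟩) / 32`.
-/

open Finset

def bitSign (c : Fin 2) : ℂ := if c = 0 then 1 else -1

@[simp] lemma bitSign_zero : bitSign 0 = 1 := rfl

@[simp] lemma bitSign_one : bitSign 1 = -1 := rfl

lemma bitSign_add (a b : Fin 2) : bitSign (a + b) = bitSign a * bitSign b := by
  fin_cases a <;> fin_cases b <;> simp [bitSign]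

lemma bitSign_mul_self (a : Fin 2) : bitSign a * bitSign a = 1 := by
  fin_cases a <;> simp [bitSign]

/-- `ZMod 2` unfolds to `Fin 2`; naming the identity map keeps bit patterns built from elements
of `G2` well typed without relying on that unfolding. -/
def toBit (c : ZMod 2) : Fin 2 := c

lemma toBit_zero : toBit 0 = 0 := rfl

lemma toBit_one : toBit 1 = 1 := rfl

lemma toBit_add (a b : ZMod 2) : toBit (a + b) = toBit a + toBit b := rfl

lemma toBit_mul (a b : ZMod 2) : toBit (a * b) = toBit a * toBit b := rfl

section PauliWord

variable {n : ℕ}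

/-- The Pauli word `X^x Z^z`, sending `|t⟩` to `(-1)^(z ⬝ᵥ t) |t + x⟩`. -/
def pauliWord (x z : Fin n → Fin 2) : Op n :=
  of fun s t => if s = t + x then bitSign (z ⬝ᵥ t) else 0

lemma pauliWord_zero_zero : pauliWord (0 : Fin n → Fin 2) 0 = 1 := by
  ext s t
  simp [pauliWord, one_apply]

lemma pauliWord_mul (x z x' z' : Fin n → Fin 2) :
    pauliWord x z * pauliWord x' z' = bitSign (z ⬝ᵥ x') • pauliWord (x + x') (z + z') := by
  ext s t
  have hs : s = t + x' + x ↔ s = t + (x + x') := by rw [add_assoc, add_comm x']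
  simp only [mul_apply, pauliWord, of_apply, Matrix.smul_apply, smul_eq_mul]
  rw [Finset.sum_eq_single (t + x') (fun u _ hu => by rw [if_neg hu, mul_zero])
    (fun h => absurd (mem_univ _) h), if_pos rfl, if_congr hs rfl rfl]
  split_ifs
  · rw [dotProduct_add, add_dotProduct, bitSign_add, bitSign_add]
    ring
  · rw [zero_mul, mul_zero]

lemma pauliWord_mul_comm (x z x' z' : Fin n → Fin 2) :
    pauliWord x z * pauliWord x' z'
      = bitSign (z ⬝ᵥ x' + z' ⬝ᵥ x) • (pauliWord x' z' * pauliWord x z) := by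
  rw [pauliWord_mul, pauliWord_mul, smul_smul, bitSign_add, mul_assoc, bitSign_mul_self, mul_one,
    add_comm x, add_comm z]

lemma pauliWord_commute {x z x' z' : Fin n → Fin 2} (h : z ⬝ᵥ x' + z' ⬝ᵥ x = 0) :
    Commute (pauliWord x z) (pauliWord x' z') := by
  rw [Commute, SemiconjBy, pauliWord_mul_comm, h, bitSign_zero, one_smul]

lemma isHermitian_pauliWord_zero (x : Fin n → Fin 2) : (pauliWord x 0).IsHermitian := by
  ext s t
  have hxx : x + x = 0 := funext fun k => (by decide : ∀ a : Fin 2, a + a = 0) (x k)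
  have hst : t = s + x ↔ s = t + x := by
    constructor <;> rintro rfl <;> rw [add_assoc, hxx, add_zero]
  simp only [conjTranspose_apply, pauliWord, of_apply, zero_dotProduct, bitSign_zero,
    if_congr hst rfl rfl]
  split_ifs <;> simp

lemma list_prod_map_pauliWord {α : Type*} (L : List α) (x : α → Fin n → Fin 2) :
    (L.map fun a => pauliWord (x a) 0).prod = pauliWord (L.map x).sum 0 := by
  induction L with
  | nil => exact pauliWord_zero_zero.symm
  | cons a L ih =>
    rw [List.map_cons, List.prod_cons, ih, pauliWord_mul, zero_dotProduct, bitSign_zero, one_smul,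
      List.map_cons, List.sum_cons, add_zero]

lemma eq_add_single_iff {ι M : Type*} [DecidableEq ι] [AddZeroClass M] (s t : ι → M) (i : ι)
    (c : M) : s = t + Pi.single i c ↔ (∀ k, k ≠ i → s k = t k) ∧ s i = t i + c := by
  rw [funext_iff]
  constructor
  · intro h
    refine ⟨fun k hk => ?_, by simpa using h i⟩
    simpa [Pi.single_eq_of_ne hk] using h k
  · rintro ⟨hne, hi⟩ k
    by_cases hk : k = i
    · subst hk; simpa using hi
    · simpa [Pi.single_eq_of_ne hk] using hne k hk

lemma onSite_Xmat (i : Fin n) : onSite n i Xmat = pauliWord (Pi.single i 1) 0 := by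
  ext s t
  have hX : Xmat (s i) (t i) = if s i = t i + 1 then 1 else 0 := by
    generalize s i = a; generalize t i = b
    fin_cases a <;> fin_cases b <;> rfl
  simp only [onSite, pauliWord, of_apply, hX, ite_zero_mul_ite_zero, mul_one, zero_dotProduct,
    bitSign_zero, eq_add_single_iff]

lemma onSite_Zmat (i : Fin n) : onSite n i Zmat = pauliWord 0 (Pi.single i 1) := by
  ext s t
  have hZ : Zmat (s i) (t i) = if s i = t i then bitSign (t i) else 0 := by
    generalize s i = a; generalize t i = b
    fin_cases a <;> fin_cases b <;> rfl
  have hst := eq_add_single_iff s t i 0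
  rw [Pi.single_zero, add_zero, add_zero] at hst
  simp only [onSite, pauliWord, of_apply, hZ, ite_zero_mul_ite_zero, one_mul, add_zero,
    single_dotProduct, hst]

end PauliWord

section Chain

variable {n : ℕ} [NeZero n]

lemma PX_pow (j : ℕ) (c : ZMod 2) :
    PX n j ^ c.val = pauliWord (Pi.single (site n j) (toBit c)) 0 := by
  rw [PX, onSite_Xmat]
  obtain rfl | rfl : c = 0 ∨ c = 1 := by revert c; decide
  · rw [toBit_zero, Pi.single_zero, pauliWord_zero_zero]
    exact pow_zero _
  · exact pow_one _

lemma PZ_pow (j : ℕ) (c : ZMod 2) :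
    PZ n j ^ c.val = pauliWord 0 (Pi.single (site n j) (toBit c)) := by
  rw [PZ, onSite_Zmat]
  obtain rfl | rfl : c = 0 ∨ c = 1 := by revert c; decide
  · rw [toBit_zero, Pi.single_zero, pauliWord_zero_zero]
    exact pow_zero _
  · exact pow_one _

lemma site_val {j : ℕ} (h1 : 1 ≤ j) (h2 : j ≤ n) : (site n j : ℕ) = j - 1 := by
  rw [site, Fin.val_mk, show j + (n - 1) = j - 1 + n by omega, Nat.add_mod_right,
    Nat.mod_eq_of_lt (by omega)]

lemma site_ne_site {u v : ℕ} (hu1 : 1 ≤ u) (hu2 : u ≤ n) (hv1 : 1 ≤ v) (hv2 : v ≤ n)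
    (huv : u ≠ v) : site n u ≠ site n v := by
  rw [Ne, Fin.ext_iff, site_val hu1 hu2, site_val hv1 hv2]
  omega

lemma PX_pow_mul_PX_pow (j k : ℕ) (a b : ZMod 2) :
    PX n j ^ a.val * PX n k ^ b.val
      = pauliWord (Pi.single (site n j) (toBit a) + Pi.single (site n k) (toBit b)) 0 := by
  rw [PX_pow, PX_pow, pauliWord_mul, zero_dotProduct, bitSign_zero, one_smul, add_zero]

def symmetryPattern (n : ℕ) [NeZero n] (h : G2) : Fin n → Fin 2 :=
  ∑ p ∈ range (n / 2),
    (Pi.single (site n (2 * p + 1)) (toBit h.1) + Pi.single (site n (2 * p + 2)) (toBit h.2))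

def stringPattern (n : ℕ) [NeZero n] (p q : ℕ) (g : G2) : Fin n → Fin 2 :=
  ∑ r ∈ range (q - (p + 1)),
    (Pi.single (site n (2 * (p + 1 + r) - 1)) (toBit g.1)
      + Pi.single (site n (2 * (p + 1 + r))) (toBit g.2))

lemma Usym_eq_pauliWord (h : G2) : Usym n h = pauliWord (symmetryPattern n h) 0 := by
  simp only [Usym, PX_pow_mul_PX_pow, list_prod_map_pauliWord]
  rfl

lemma Ustr_eq_pauliWord (p q : ℕ) (g : G2) :
    Ustr n p q g = pauliWord (stringPattern n p q g) 0 := by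
  simp only [Ustr, PX_pow_mul_PX_pow, list_prod_map_pauliWord]
  rfl

lemma VL_eq_pauliWord {p : ℕ} (hp : 1 ≤ p) (hpn : 2 * p ≤ n) (g : G2) :
    VL n p g = pauliWord (Pi.single (site n (2 * p)) (toBit g.2))
      (Pi.single (site n (2 * p - 1)) (toBit g.2) + Pi.single (site n (2 * p)) (toBit g.1)) := by
  have hne : site n (2 * p) ≠ site n (2 * p - 1) :=
    site_ne_site (by omega) hpn (by omega) (by omega) (by omega)
  simp [VL, PZ_pow, PX_pow, pauliWord_mul, Pi.single_eq_of_ne hne]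

lemma VR_eq_pauliWord (q : ℕ) (g : G2) :
    VR n q g = bitSign (toBit g.2 * toBit g.1) •
      pauliWord (Pi.single (site n (2 * q - 1)) (toBit g.1))
        (Pi.single (site n (2 * q - 1)) (toBit g.2) + Pi.single (site n (2 * q)) (toBit g.1)) := by
  simp [VR, PZ_pow, PX_pow, pauliWord_mul]

lemma symmetryPattern_apply_site {v : ℕ} (hv : 1 ≤ v) (hvn : v ≤ 2 * (n / 2)) (h : G2) :
    symmetryPattern n h (site n v) = if v % 2 = 1 then toBit h.1 else toBit h.2 := by
  rw [symmetryPattern, Finset.sum_apply, Finset.sum_eq_single ((v - 1) / 2)]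
  · split_ifs with hodd
    · rw [show 2 * ((v - 1) / 2) + 1 = v by omega]
      simp (disch := (apply site_ne_site <;> omega)) [Pi.single_eq_of_ne]
    · rw [show 2 * ((v - 1) / 2) + 2 = v by omega]
      simp (disch := (apply site_ne_site <;> omega)) [Pi.single_eq_of_ne]
  · intro p hp hpv
    rw [mem_range] at hp
    simp (disch := (apply site_ne_site <;> omega)) [Pi.single_eq_of_ne]
  · simp only [mem_range, not_lt]
    omega

lemma stringPattern_apply_eq_zero {p q v : ℕ} (hqn : 2 * q ≤ n) (hv : 2 * q - 1 ≤ v)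
    (hvn : v ≤ n) (g : G2) : stringPattern n p q g (site n v) = 0 := by
  rw [stringPattern, Finset.sum_apply]
  refine Finset.sum_eq_zero fun r hr => ?_
  rw [mem_range] at hr
  simp (disch := (apply site_ne_site <;> omega)) [Pi.single_eq_of_ne]

def symplecticForm (g h : G2) : ZMod 2 := g.2 * h.1 + g.1 * h.2

lemma symplecticForm_eq_one {g h : G2} (hg : g ≠ 0) (hh : h ≠ 0) (hgh : g ≠ h) :
    symplecticForm g h = 1 := by
  revert g h
  decide

lemma VR_mul_Usym {q : ℕ} (hq : 1 ≤ q) (hqn : 2 * q ≤ n) (g h : G2) :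
    VR n q g * Usym n h = bitSign (toBit (symplecticForm g h)) • (Usym n h * VR n q g) := by
  rw [VR_eq_pauliWord, Usym_eq_pauliWord, smul_mul_assoc, pauliWord_mul_comm, mul_smul_comm,
    smul_comm]
  have hodd : symmetryPattern n h (site n (2 * q - 1)) = toBit h.1 := by
    rw [symmetryPattern_apply_site (by omega) (by omega), if_pos (by omega)]
  have heven : symmetryPattern n h (site n (2 * q)) = toBit h.2 := by
    rw [symmetryPattern_apply_site (by omega) (by omega), if_neg (by omega)]
  simp [hodd, heven, symplecticForm, toBit_add, toBit_mul]

lemma VR_commute_VL {p q : ℕ} (hp : 1 ≤ p) (hpq : p < q) (hqn : 2 * q ≤ n) (g k : G2) :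
    Commute (VR n q g) (VL n p k) := by
  rw [VR_eq_pauliWord, VL_eq_pauliWord hp (by omega)]
  refine (pauliWord_commute ?_).smul_left _
  simp (disch := (apply site_ne_site <;> omega)) [Pi.single_eq_of_ne]

lemma VR_commute_Ustr {p q : ℕ} (hqn : 2 * q ≤ n) (g k : G2) :
    Commute (VR n q g) (Ustr n p q k) := by
  rw [VR_eq_pauliWord, Ustr_eq_pauliWord]
  refine (pauliWord_commute ?_).smul_left _
  simp [stringPattern_apply_eq_zero hqn le_rfl (by omega),
    stringPattern_apply_eq_zero hqn (by omega : 2 * q - 1 ≤ 2 * q) hqn]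

lemma TSOP_eq_smul_Usym_mul_SOPm {p q : ℕ} (hp : 1 ≤ p) (hpq : p < q) (hqn : 2 * q ≤ n)
    (g h : G2) :
    TSOP n p q g h = bitSign (toBit (symplecticForm g h)) • (Usym n h * SOPm n p q g) := by
  have hc : Commute (VR n q g) (VL n p g * Ustr n p q g) :=
    (VR_commute_VL hp hpq hqn g g).mul_right (VR_commute_Ustr hqn g g)
  calc TSOP n p q g h = VR n q g * Usym n h * VL n p g * Ustr n p q g := rfl
    _ = bitSign (toBit (symplecticForm g h)) •
          (Usym n h * (VR n q g * (VL n p g * Ustr n p q g))) := by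
      rw [VR_mul_Usym (by omega) hqn]
      simp only [smul_mul_assoc, mul_assoc]
    _ = bitSign (toBit (symplecticForm g h)) • (Usym n h * SOPm n p q g) := by
      rw [hc.eq, SOPm]

end Chain

section Expectation

variable {ι : Type*} [Fintype ι]

lemma trace_vecMulVec_mul {R : Type*} [CommSemiring R] (u v : ι → R) (A : Matrix ι ι R) :
    (vecMulVec u v * A).trace = v ⬝ᵥ A *ᵥ u := by
  rw [vecMulVec_mul, trace_vecMulVec, dotProduct_comm, ← dotProduct_mulVec]

lemma dotProduct_mul_mulVec_of_mulVec_eq_self {U : Matrix ι ι ℂ} (hU : U.IsHermitian)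
    {φ : ι → ℂ} (hφ : U *ᵥ φ = φ) (A : Matrix ι ι ℂ) :
    star φ ⬝ᵥ (U * A) *ᵥ φ = star φ ⬝ᵥ A *ᵥ φ := by
  rw [← mulVec_mulVec, dotProduct_mulVec, ← hU.eq, ← star_mulVec, hφ]

end Expectation

lemma trace_vecMulVec_mul_Owin {n : ℕ} [NeZero n] (hn : 6 ∣ n) {φ : QState n}
    (hunit : star φ ⬝ᵥ φ = 1) (hsym : ∀ g : G2, Usym n g *ᵥ φ = φ) {g h : G2} (hg : g ≠ 0)
    (hh : h ≠ 0) (hgh : g ≠ h) :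
    (vecMulVec φ (star φ) * Owin n g h).trace
      = (13 + 3 * (star φ ⬝ᵥ SOPm n 1 (n / 6 + 1) g *ᵥ φ)) / 16 := by
  have hqn : 2 * (n / 6 + 1) ≤ n := by
    obtain ⟨m, rfl⟩ := hn
    have := NeZero.ne (6 * m)
    omega
  set S := SOPm n 1 (n / 6 + 1) g
  have hT : TSOP n 1 (n / 6 + 1) g h = -(Usym n h * S) := by
    rw [TSOP_eq_smul_Usym_mul_SOPm le_rfl (by omega) hqn, symplecticForm_eq_one hg hh hgh,
      toBit_one, bitSign_one, neg_one_smul]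
  have hinv (k : G2) (A : Op n) : star φ ⬝ᵥ (Usym n k * A) *ᵥ φ = star φ ⬝ᵥ A *ᵥ φ :=
    dotProduct_mul_mulVec_of_mulVec_eq_self
      (by rw [Usym_eq_pauliWord]; exact isHermitian_pauliWord_zero _) (hsym k) A
  have hU (k : G2) : star φ ⬝ᵥ Usym n k *ᵥ φ = 1 := by rw [hsym, hunit]
  simp only [trace_vecMulVec_mul, Owin, hT, mul_neg, smul_mulVec, add_mulVec, sub_mulVec,
    neg_mulVec, one_mulVec, dotProduct_smul, dotProduct_add, dotProduct_sub, dotProduct_neg, hinv,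
    hU, hunit]
  simp only [smul_eq_mul, nsmul_eq_mul]
  push_cast
  ring

theorem symmetric_pure_state_winning_probability (n : ℕ) [NeZero n] (hn : 6 ∣ n)
    (φ : QState n) (hunit : star φ ⬝ᵥ φ = 1)
    (hsym : ∀ g : G2, (Usym n g).mulVec φ = φ) :
    (∀ g h : G2, g ≠ 0 → h ≠ 0 → g ≠ h →
      (Matrix.vecMulVec φ (star φ) * Owin n g h).trace
        = (13 + 3 * (star φ ⬝ᵥ (SOPm n 1 (n / 6 + 1) g).mulVec φ)) / 16) ∧
    ((∀ g : G2, g ≠ 0 → 1 / 3 < (star φ ⬝ᵥ (SOPm n 1 (n / 6 + 1) g).mulVec φ).re) →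
      ∀ g h : G2, g ≠ 0 → h ≠ 0 → g ≠ h →
        7 / 8 < ((Matrix.vecMulVec φ (star φ) * Owin n g h).trace).re) := by
  refine ⟨fun g h hg hh hgh => trace_vecMulVec_mul_Owin hn hunit hsym hg hh hgh,
    fun hS g h hg hh hgh => ?_⟩
  have hSg := hS g hg
  rw [trace_vecMulVec_mul_Owin hn hunit hsym hg hh hgh]
  simp only [div_ofNat_re, add_re, re_ofNat, mul_re, im_ofNat, zero_mul, sub_zero]
  linarith
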